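/- arXiv:1107.0875 — 4 statements merged into one kernel-verified Lean document; each statement's English description precedes it below -/
import Mathlib

section
/- Let A be a loxodromic (or parabolic) element of PSL(2,C) acting on the ball model of hyperbolic 3-space with center O. If d_H(O, A·O) > R, then the Euclidean distance between A·O and the attracting fixed point A^+ of A (respectively the unique fixed point if A is parabolic) is at most C·e^{-R/2} for a universal constant C. -/
open Filter Set
open scoped ENNReal

noncomputable section

abbrev E3 := EuclideanSpace ℝ (Fin 3)

/-- The open unit ball: the Poincaré ball model of hyperbolic 3-space. -/
def ball3 : Set E3 := Metric.ball 0 1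

/-- Hyperbolic distance in the Poincaré ball model. -/
def hDist (x y : E3) : ℝ :=
  2 * Real.arsinh (dist x y / Real.sqrt ((1 - ‖x‖ ^ 2) * (1 - ‖y‖ ^ 2)))

/-- The hyperbolic geodesic segment between `x` and `y`: points of the ball lying
between them with respect to the hyperbolic metric. -/
def hSeg (x y : E3) : Set E3 :=
  {z | z ∈ ball3 ∧ hDist x z + hDist z y = hDist x y}

/-- A horoball in the ball model: a closed Euclidean ball internally tangent to the
unit sphere. -/
def Horoball (H : Set E3) : Prop :=
  ∃ c : E3, ∃ r : ℝ, 0 < r ∧ ‖c‖ = 1 - r ∧ H = Metric.closedBall c r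

/-- A (complete) geodesic line in the ball model. -/
def IsGeodesicLine (L : Set E3) : Prop :=
  ∃ γ : ℝ → E3, (∀ t, γ t ∈ ball3) ∧ (∀ s t, hDist (γ s) (γ t) = |s - t|) ∧ L = Set.range γ

/-- Hyperbolic distance from a point to a set. -/
def hDistToSet (x : E3) (L : Set E3) : ℝ := sInf ((hDist x) '' L)

/-- The equidistant tube of radius `R` about a geodesic line `L`. -/
def tube (L : Set E3) (R : ℝ) : Set E3 := {x ∈ ball3 | hDistToSet x L ≤ R}

/-- The boundary of the equidistant tube of radius `R` about `L`. -/
def tubeBoundary (L : Set E3) (R : ℝ) : Set E3 := {x ∈ ball3 | hDistToSet x L = R}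

/-- A thin component: a horoball or an equidistant tube (of radius at least `R₀`). -/
def ThinR (R₀ : ℝ) (T : Set E3) : Prop :=
  Horoball T ∨ ∃ L R, IsGeodesicLine L ∧ R₀ ≤ R ∧ T = tube L R

/-- Length of a path `γ` on `[a,b]`, measured with respect to a distance function `d`,
as the supremum of the `d`-lengths of inscribed polygonal approximations. -/
def pathELength {α : Type*} (d : α → α → ℝ) (γ : ℝ → α) (a b : ℝ) : ℝ≥0∞ :=
  ⨆ p : {q : ℕ × (ℕ → ℝ) // Monotone q.2 ∧ q.2 0 = a ∧ q.2 q.1 = b ∧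
      ∀ i, q.2 i ∈ Set.Icc a b},
    ∑ i ∈ Finset.range p.1.1, ENNReal.ofReal (d (γ (p.1.2 i)) (γ (p.1.2 (i + 1))))

/-- The intrinsic (induced path) distance between `x` and `y` inside the set `S`,
with respect to the distance function `d`. -/
def intrinsicDist {α : Type*} [TopologicalSpace α] (d : α → α → ℝ) (S : Set α)
    (x y : α) : ℝ≥0∞ :=
  ⨅ γ : {γ : ℝ → α // ContinuousOn γ (Set.Icc 0 1) ∧ γ 0 = x ∧ γ 1 = y ∧
      ∀ t ∈ Set.Icc (0 : ℝ) 1, γ t ∈ S},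
    pathELength d γ.1 0 1

/-- A bijective self-map of the ball preserving the hyperbolic metric. -/
def IsHIsom (A : E3 → E3) : Prop :=
  Set.BijOn A ball3 ball3 ∧ ∀ x ∈ ball3, ∀ y ∈ ball3, hDist (A x) (A y) = hDist x y

/-- An action of a group by hyperbolic isometries of the ball model. -/
def IsIsomAction {Γ : Type*} [Group Γ] (ρ : Γ → E3 → E3) : Prop :=
  (∀ g, IsHIsom (ρ g)) ∧ (∀ x, ρ 1 x = x) ∧ ∀ g h x, ρ (g * h) x = ρ g (ρ h x)

/-- Word length with respect to a (symmetrized) generating set `S`. -/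
def wordLength {Γ : Type*} [Group Γ] (S : Set Γ) (g : Γ) : ℕ :=
  sInf {n | ∃ l : List Γ, l.length = n ∧ (∀ x ∈ l, x ∈ S ∨ x⁻¹ ∈ S) ∧ l.prod = g}

/-- The limit set: accumulation points on the sphere at infinity of the orbit of `O`. -/
def limitSet {Γ : Type*} [Group Γ] (ρ : Γ → E3 → E3) (O : E3) : Set E3 :=
  {ξ | ‖ξ‖ = 1 ∧ ∃ u : ℕ → Γ, Tendsto (fun n => ρ (u n) O) atTop (nhds ξ)}

/-- Hyperbolic convexity. -/
def hConvex (C : Set E3) : Prop := ∀ x ∈ C, ∀ y ∈ C, hSeg x y ⊆ C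

/-- The hyperbolic convex hull (in the ball) of a subset `Λ` of the sphere at infinity. -/
def limitHull (Λ : Set E3) : Set E3 :=
  (⋂₀ {C | C ⊆ ball3 ∧ hConvex C ∧ Λ ⊆ closure C}) ∩ ball3

/-- Convex cocompactness: the orbit of `O` is cobounded in the convex hull of the
limit set (i.e. the quotient of the convex core is compact). -/
def ConvexCocompact {Γ : Type*} [Group Γ] (ρ : Γ → E3 → E3) (O : E3) : Prop :=
  ∃ D : ℝ, ∀ x ∈ limitHull (limitSet ρ O), ∃ g : Γ, hDist x (ρ g O) ≤ D

/-- `g` acts as a parabolic isometry: no fixed point in the ball, and zero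
infimal displacement. -/
def IsParabolicIsom (A : E3 → E3) : Prop :=
  (∀ x ∈ ball3, A x ≠ x) ∧ sInf {d | ∃ x ∈ ball3, d = hDist x (A x)} = 0

/-- Geometric finiteness, phrased via a Γ-invariant family of disjoint horoballs whose
complement in the convex core is cobounded for the orbit of `O`. -/
def GeomFiniteBall {Γ : Type*} [Group Γ] (ρ : Γ → E3 → E3) (O : E3) : Prop :=
  ∃ 𝓗 : Set (Set E3),
    (∀ H ∈ 𝓗, Horoball H) ∧
    (∀ H ∈ 𝓗, ∀ H' ∈ 𝓗, H ≠ H' → Disjoint H H') ∧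
    (∀ g : Γ, ∀ H ∈ 𝓗, (ρ g) '' H ∈ 𝓗) ∧
    ∃ D : ℝ, ∀ x ∈ limitHull (limitSet ρ O) \ ⋃₀ 𝓗, ∃ g : Γ, hDist x (ρ g O) ≤ D

/-!
In the ball, `d_E(x, y) ≤ 4 e^{-(x | y)₀}` for the Gromov product
`(x | y)₀ = (d(0, x) + d(0, y) - d(x, y)) / 2` at the centre.
As `A` is an isometry, `d(A 0, Aⁿ⁺¹ 0) = d(0, Aⁿ 0)`, so `(A 0 | Aⁿ⁺¹ 0)₀ ≥ d(0, A 0) / 2` whenever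
`d(0, Aⁿ 0) ≤ d(0, Aⁿ⁺¹ 0)`. Since the orbit of `0` tends to the boundary, `d(0, Aⁿ 0) → ∞` and
this happens for infinitely many `n`; letting `n → ∞` along them gives
`d_E(A 0, ξ) ≤ 4 e^{-d(0, A 0)/2}`.
-/

open Topology

lemma frequently_le_succ_of_tendsto_atTop {α : Type*} [LinearOrder α] [NoMaxOrder α] {u : ℕ → α}
    (hu : Tendsto u atTop atTop) : ∃ᶠ n in atTop, u n ≤ u (n + 1) := by
  by_contra h
  obtain ⟨N, hN⟩ := eventually_atTop.1 (not_frequently.1 h)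
  have hanti : AntitoneOn u {n | N ≤ n} :=
    antitoneOn_nat_Ici_of_succ_le fun n hn => (lt_of_not_ge (hN n hn)).le
  obtain ⟨n, hn, hNn⟩ := ((hu.eventually_gt_atTop (u N)).and (eventually_ge_atTop N)).exists
  exact (hanti (le_refl N) hNn hNn).not_gt hn

lemma hDist_zero_left (x : E3) :
    hDist 0 x = 2 * Real.arsinh (‖x‖ / Real.sqrt (1 - ‖x‖ ^ 2)) := by
  simp [hDist]

lemma exp_neg_half_hDist_zero {x : E3} (hx : ‖x‖ < 1) :
    Real.exp (-hDist 0 x / 2) = Real.sqrt (1 - ‖x‖ ^ 2) / (1 + ‖x‖) := by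
  have hr := norm_nonneg x
  set r := ‖x‖
  have hp : 0 < Real.sqrt (1 - r ^ 2) := Real.sqrt_pos.2 (by nlinarith)
  have hp2 : Real.sqrt (1 - r ^ 2) ^ 2 = 1 - r ^ 2 := Real.sq_sqrt (by nlinarith)
  have hinv : Real.sqrt (1 + (-(r / Real.sqrt (1 - r ^ 2))) ^ 2) = 1 / Real.sqrt (1 - r ^ 2) := by
    rw [Real.sqrt_eq_iff_mul_self_eq_of_pos (by positivity)]
    field_simp
    linarith
  rw [hDist_zero_left, show -(2 * Real.arsinh (r / Real.sqrt (1 - r ^ 2))) / 2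
      = Real.arsinh (-(r / Real.sqrt (1 - r ^ 2))) by rw [Real.arsinh_neg]; ring,
    Real.exp_arsinh, hinv]
  field_simp
  nlinarith

lemma neg_log_one_sub_sq_le_hDist_zero {x : E3} (hx : ‖x‖ < 1) :
    -Real.log (1 - ‖x‖ ^ 2) ≤ hDist 0 x := by
  have hpos : 0 < 1 - ‖x‖ ^ 2 := by nlinarith [norm_nonneg x]
  have hle : Real.exp (-hDist 0 x / 2) ≤ Real.sqrt (1 - ‖x‖ ^ 2) := by
    rw [exp_neg_half_hDist_zero hx]
    exact div_le_self (Real.sqrt_nonneg _) (by linarith [norm_nonneg x])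
  have := Real.log_le_log (Real.exp_pos _) hle
  rw [Real.log_exp, Real.log_sqrt hpos.le] at this
  linarith

lemma tendsto_hDist_zero_nhdsWithin_ball3 {ξ : E3} (hξ : ‖ξ‖ = 1) :
    Tendsto (hDist 0) (𝓝[ball3] ξ) atTop := by
  have hmem : ∀ᶠ x in 𝓝[ball3] ξ, ‖x‖ < 1 :=
    eventually_nhdsWithin_of_forall fun x hx => mem_ball_zero_iff.1 hx
  have hgap : Tendsto (fun x : E3 => 1 - ‖x‖ ^ 2) (𝓝[ball3] ξ) (𝓝[>] 0) := by
    refine tendsto_nhdsWithin_iff.2 ⟨?_, hmem.mono fun x hx => ?_⟩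
    · have : Continuous fun x : E3 => 1 - ‖x‖ ^ 2 := by fun_prop
      simpa [hξ] using (this.tendsto ξ).mono_left nhdsWithin_le_nhds
    · exact Set.mem_Ioi.2 (by nlinarith [norm_nonneg x])
  exact tendsto_atTop_mono' _ (hmem.mono fun x hx => neg_log_one_sub_sq_le_hDist_zero hx)
    (tendsto_neg_atBot_atTop.comp (Real.tendsto_log_nhdsGT_zero.comp hgap))

lemma div_sqrt_le_exp_half_hDist (x y : E3) :
    dist x y / Real.sqrt ((1 - ‖x‖ ^ 2) * (1 - ‖y‖ ^ 2)) ≤ Real.exp (hDist x y / 2) := by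
  rw [hDist, mul_div_cancel_left₀ _ two_ne_zero, Real.exp_arsinh]
  exact le_add_of_nonneg_right (Real.sqrt_nonneg _)

lemma dist_le_four_mul_exp_neg_gromov {x y : E3} (hx : ‖x‖ < 1) (hy : ‖y‖ < 1) :
    dist x y ≤ 4 * Real.exp ((hDist x y - hDist 0 x - hDist 0 y) / 2) := by
  have hr := norm_nonneg x
  have hs := norm_nonneg y
  have hp : 0 < Real.sqrt (1 - ‖x‖ ^ 2) := Real.sqrt_pos.2 (by nlinarith)
  have hq : 0 < Real.sqrt (1 - ‖y‖ ^ 2) := Real.sqrt_pos.2 (by nlinarith)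
  have hsplit : Real.exp ((hDist x y - hDist 0 x - hDist 0 y) / 2)
      = Real.exp (hDist x y / 2) * Real.exp (-hDist 0 x / 2) * Real.exp (-hDist 0 y / 2) := by
    rw [← Real.exp_add, ← Real.exp_add]; ring_nf
  have hmain := div_sqrt_le_exp_half_hDist x y
  rw [Real.sqrt_mul (by nlinarith)] at hmain
  rw [hsplit, exp_neg_half_hDist_zero hx, exp_neg_half_hDist_zero hy]
  calc dist x y ≤ 4 * (dist x y / (Real.sqrt (1 - ‖x‖ ^ 2) * Real.sqrt (1 - ‖y‖ ^ 2)))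
        * (Real.sqrt (1 - ‖x‖ ^ 2) / (1 + ‖x‖)) * (Real.sqrt (1 - ‖y‖ ^ 2) / (1 + ‖y‖)) := by
        field_simp
        have : (1 + ‖x‖) * (1 + ‖y‖) ≤ 4 := by nlinarith
        nlinarith [mul_nonneg (dist_nonneg (x := x) (y := y)) (sub_nonneg.2 this)]
    _ ≤ 4 * (Real.exp (hDist x y / 2) * (Real.sqrt (1 - ‖x‖ ^ 2) / (1 + ‖x‖))
          * (Real.sqrt (1 - ‖y‖ ^ 2) / (1 + ‖y‖))) := by
        rw [← mul_assoc, ← mul_assoc]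
        gcongr

lemma dist_apply_zero_le_of_tendsto_iterate {A : E3 → E3} {ξ : E3} (hA : IsHIsom A)
    (hξ : ‖ξ‖ = 1) (hconv : Tendsto (fun n => A^[n] 0) atTop (𝓝 ξ)) :
    dist (A 0) ξ ≤ 4 * Real.exp (-hDist 0 (A 0) / 2) := by
  have h0 : (0 : E3) ∈ ball3 := Metric.mem_ball_self one_pos
  have hmem : ∀ n, A^[n] 0 ∈ ball3 := fun n => hA.1.mapsTo.iterate n h0
  have hnorm : ∀ n, ‖A^[n] (0 : E3)‖ < 1 := fun n => mem_ball_zero_iff.1 (hmem n)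
  have hgrow : ∃ᶠ n in atTop, hDist 0 (A^[n] 0) ≤ hDist 0 (A^[n + 1] 0) :=
    frequently_le_succ_of_tendsto_atTop <| (tendsto_hDist_zero_nhdsWithin_ball3 hξ).comp <|
      tendsto_nhdsWithin_iff.2 ⟨hconv, Eventually.of_forall hmem⟩
  refine le_of_tendsto_of_frequently
    ((tendsto_add_atTop_iff_nat 1).2 (tendsto_const_nhds.dist hconv)) (hgrow.mono fun n hn => ?_)
  have hshift : hDist (A 0) (A^[n + 1] 0) = hDist 0 (A^[n] 0) := by
    rw [Function.iterate_succ_apply']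
    exact hA.2 0 h0 _ (hmem n)
  refine (dist_le_four_mul_exp_neg_gromov (by simpa using hnorm 1) (hnorm (n + 1))).trans ?_
  gcongr
  linarith

/-- If `A` is a loxodromic or parabolic isometry of the ball model with
attracting fixed point (resp. unique fixed point) `ξ` on the boundary sphere, and
`d_H(O, A·O) > R`, then `d_E(A·O, ξ) ≤ C·e^{-R/2}` for a universal constant `C`.
The attracting/unique fixed point is characterized by the convergence of all forward
orbits to `ξ`. -/
theorem stmt1 :
    ∃ C : ℝ, 0 < C ∧ ∀ (A : E3 → E3) (ξ : E3) (R : ℝ),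
      IsHIsom A → ‖ξ‖ = 1 →
      (∀ x ∈ ball3, Tendsto (fun n => A^[n] x) atTop (nhds ξ)) →
      R < hDist 0 (A 0) →
      dist (A 0) ξ ≤ C * Real.exp (-R / 2) := by
  refine ⟨4, by norm_num, fun A ξ R hA hξ hconv hR => ?_⟩
  calc dist (A 0) ξ ≤ 4 * Real.exp (-hDist 0 (A 0) / 2) :=
        dist_apply_zero_le_of_tendsto_iterate hA hξ (hconv 0 (Metric.mem_ball_self one_pos))
    _ ≤ 4 * Real.exp (-R / 2) := by gcongr

end
end

section
/- In the ball model of hyperbolic 3-space, the perpendicular bisector (in the hyperbolic sense) of the geodesic segment from the center O to A·O equals the isometric sphere of A^{-1}, for any isometry A of hyperbolic 3-space with A·O ≠ O. -/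
open Filter Set
open scoped Topology
open scoped ENNReal

noncomputable section

/-
Pulling back by `A⁻¹`, the distance from `x` to `A·O` is the distance from `A⁻¹ x` to `O`, and
`d(y, O)` is an increasing function of `‖y‖`; so `x` lies on the bisector iff `‖A⁻¹ x‖ = ‖x‖`.
On the other hand `sinh (d(x,y)/2) = ‖x - y‖ / √((1-‖x‖²)(1-‖y‖²))` shows that an isometry `F`
stretches Euclidean lengths at `x` by `(1-‖F x‖²)/(1-‖x‖²)`, which is `1` iff `‖F x‖ = ‖x‖`.
-/

section Differential

variable {E F : Type*} [NormedAddCommGroup E] [NormedSpace ℝ E]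
  [NormedAddCommGroup F] [NormedSpace ℝ F]

lemma ContinuousLinearMap.opNorm_eq_of_norm_apply_eq [Nontrivial E] {φ : E →L[ℝ] F} {c : ℝ}
    (hc : 0 ≤ c) (h : ∀ v, ‖φ v‖ = ‖v‖ * c) : ‖φ‖ = c := by
  refine φ.opNorm_eq_of_bounds hc (fun v => (h v).trans_le (mul_comm _ _).le) fun N _ hN => ?_
  obtain ⟨v, hv⟩ := exists_ne (0 : E)
  have := (h v).symm.trans_le (hN v)
  rw [mul_comm N] at this
  exact le_of_mul_le_mul_left this (norm_pos_iff.mpr hv)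

lemma norm_fderiv_apply_of_dist_eq {f : E → F} {c : E → ℝ} {x : E}
    (hf : DifferentiableAt ℝ f x) (hc : ContinuousAt c x)
    (hdist : ∀ᶠ y in 𝓝 x, dist (f x) (f y) = dist x y * c y) (v : E) :
    ‖fderiv ℝ f x v‖ = ‖v‖ * c x := by
  have hl : HasDerivAt (fun t : ℝ => x + t • v) v 0 := by
    simpa using ((hasDerivAt_id (0 : ℝ)).smul_const v).const_add x
  have hline : Tendsto (fun t : ℝ => x + t • v) (𝓝 0) (𝓝 x) := by
    simpa using hl.continuousAt.tendsto
  have hg : HasDerivAt (fun t : ℝ => f (x + t • v)) (fderiv ℝ f x v) 0 :=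
    hf.hasFDerivAt.comp_hasDerivAt_of_eq 0 hl (by simp)
  have hslope := (hasDerivAt_iff_tendsto_slope.mp hg).norm
  have hlim : Tendsto (fun t : ℝ => ‖v‖ * c (x + t • v)) (𝓝[≠] 0) (𝓝 (‖v‖ * c x)) :=
    ((hc.tendsto.comp hline).mono_left nhdsWithin_le_nhds).const_mul _
  refine tendsto_nhds_unique (hslope.congr' ?_) hlim
  filter_upwards [(hline.eventually hdist).filter_mono nhdsWithin_le_nhds, self_mem_nhdsWithin]
    with t ht ht0
  rw [slope_def_module, norm_smul, norm_inv, Real.norm_eq_abs, sub_zero, zero_smul, add_zero,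
    ← dist_eq_norm, dist_comm, ht, dist_self_add_right, norm_smul, Real.norm_eq_abs]
  field_simp [abs_ne_zero.mpr ht0]

end Differential

lemma one_sub_norm_sq_pos {x : E3} (hx : x ∈ ball3) : 0 < 1 - ‖x‖ ^ 2 := by
  rw [ball3, mem_ball_zero_iff] at hx
  nlinarith [norm_nonneg x]

lemma hDist_zero_right (x : E3) :
    hDist x 0 = 2 * Real.arsinh (‖x‖ / √(1 - ‖x‖ ^ 2)) := by
  simp [hDist]

lemma hDist_zero_right_eq_iff {x y : E3} (hx : x ∈ ball3) (hy : y ∈ ball3) :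
    hDist x 0 = hDist y 0 ↔ ‖x‖ = ‖y‖ := by
  refine ⟨fun h => ?_, fun h => by rw [hDist_zero_right, hDist_zero_right, h]⟩
  rw [hDist_zero_right, hDist_zero_right, mul_right_inj' two_ne_zero,
    Real.arsinh_inj] at h
  have hsq := congrArg (· ^ 2) h
  simp only [div_pow, Real.sq_sqrt (one_sub_norm_sq_pos hx).le,
    Real.sq_sqrt (one_sub_norm_sq_pos hy).le] at hsq
  rw [div_eq_div_iff (one_sub_norm_sq_pos hx).ne' (one_sub_norm_sq_pos hy).ne'] at hsq
  exact (sq_eq_sq₀ (norm_nonneg x) (norm_nonneg y)).mp (by linarith)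

namespace IsHIsom

lemma dist_apply_eq {F : E3 → E3} (hF : IsHIsom F) {x y : E3} (hx : x ∈ ball3)
    (hy : y ∈ ball3) :
    dist (F x) (F y) = dist x y *
      (√((1 - ‖F x‖ ^ 2) * (1 - ‖F y‖ ^ 2)) / √((1 - ‖x‖ ^ 2) * (1 - ‖y‖ ^ 2))) := by
  have hxy := Real.sqrt_pos.mpr (mul_pos (one_sub_norm_sq_pos hx) (one_sub_norm_sq_pos hy))
  have hFxy := Real.sqrt_pos.mpr (mul_pos (one_sub_norm_sq_pos (hF.1.mapsTo hx))
    (one_sub_norm_sq_pos (hF.1.mapsTo hy)))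
  have h := hF.2 x hx y hy
  rw [hDist, hDist, mul_right_inj' two_ne_zero, Real.arsinh_inj,
    div_eq_div_iff hFxy.ne' hxy.ne'] at h
  rw [← mul_div_assoc, eq_div_iff hxy.ne', h]

lemma norm_fderiv {F : E3 → E3} (hF : IsHIsom F) {x : E3} (hx : x ∈ ball3)
    (hdiff : DifferentiableAt ℝ F x) :
    ‖fderiv ℝ F x‖ = (1 - ‖F x‖ ^ 2) / (1 - ‖x‖ ^ 2) := by
  set c : E3 → ℝ := fun y =>
    √((1 - ‖F x‖ ^ 2) * (1 - ‖F y‖ ^ 2)) / √((1 - ‖x‖ ^ 2) * (1 - ‖y‖ ^ 2))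
  have hpos := one_sub_norm_sq_pos hx
  have hFpos := one_sub_norm_sq_pos (hF.1.mapsTo hx)
  have hcx : c x = (1 - ‖F x‖ ^ 2) / (1 - ‖x‖ ^ 2) := by
    simp only [c, Real.sqrt_mul_self hpos.le, Real.sqrt_mul_self hFpos.le]
  have hc : ContinuousAt c x := by
    have hFx := hdiff.continuousAt
    exact ContinuousAt.div (by fun_prop) (by fun_prop)
      (Real.sqrt_pos.mpr (mul_pos hpos hpos)).ne'
  have hdist : ∀ᶠ y in 𝓝 x, dist (F x) (F y) = dist x y * c y :=
    eventually_of_mem (Metric.isOpen_ball.mem_nhds hx) fun y hy => hF.dist_apply_eq hx hy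
  rw [← hcx]
  exact (fderiv ℝ F x).opNorm_eq_of_norm_apply_eq ((div_pos hFpos hpos).le.trans_eq hcx.symm)
    (norm_fderiv_apply_of_dist_eq hdiff hc hdist)

end IsHIsom

theorem stmt2_general (A Ainv : E3 → E3)
    (hA : IsHIsom A) (hAinv : IsHIsom Ainv)
    (hinv₁ : ∀ x ∈ ball3, Ainv (A x) = x)
    (hdiff : ∀ x ∈ ball3, DifferentiableAt ℝ Ainv x) :
    {x ∈ ball3 | hDist x 0 = hDist x (A 0)} =
      {x ∈ ball3 | ‖fderiv ℝ Ainv x‖ = 1} := by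
  have h0 : (0 : E3) ∈ ball3 := by simp [ball3]
  refine Set.ext fun x => and_congr_right fun hx => ?_
  rw [hAinv.norm_fderiv hx (hdiff x hx), div_eq_one_iff_eq (one_sub_norm_sq_pos hx).ne',
    ← hAinv.2 x hx (A 0) (hA.1.mapsTo h0), hinv₁ 0 h0,
    hDist_zero_right_eq_iff hx (hAinv.1.mapsTo hx), sub_right_inj,
    sq_eq_sq₀ (norm_nonneg _) (norm_nonneg _), eq_comm]

/-- In the ball model, the hyperbolic perpendicular bisector of the
segment from the centre `O = 0` to `A·O` coincides with the isometric sphere of `A⁻¹`,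
i.e. the locus where the Euclidean derivative of `A⁻¹` has norm one. -/
theorem stmt2 (A Ainv : E3 → E3)
    (hA : IsHIsom A) (hAinv : IsHIsom Ainv)
    (hinv₁ : ∀ x ∈ ball3, Ainv (A x) = x) (hinv₂ : ∀ x ∈ ball3, A (Ainv x) = x)
    (hdiff : ∀ x ∈ ball3, DifferentiableAt ℝ Ainv x)
    (hne : A 0 ≠ 0) :
    {x ∈ ball3 | hDist x 0 = hDist x (A 0)} =
      {x ∈ ball3 | ‖fderiv ℝ Ainv x‖ = 1} :=
  stmt2_general A Ainv hA hAinv hinv₁ hdiff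

end
end

section
/- There is a universal constant c > 0 with the following property. In the ball model of hyperbolic 3-space with center O, let H be a horoball whose interior does not contain O, and let P₁, P₂ ∈ ∂H lie outside the hyperbolic ball B_H(O; N). Then the hyperbolic geodesic segment [P₁, P₂] lies outside B_H(O; N/4 − c). -/
open Filter Set
open scoped ENNReal

noncomputable section

/-! Write `σ(x, y) = sinh (d_H(x, y) / 2) = |x - y| / √((1 - |x|²)(1 - |y|²))`.
The horoball `H` lies inside the horoball `H₀` based at the same point `ξ` at infinity whose
boundary passes through `O`, and every `P ∈ H₀` satisfies `|P - ξ|² ≤ 1 - |P|²`. Ptolemy's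
inequality for `P₁, O, P₂, ξ` then gives `σ(P₁, P₂) ≤ σ(O, P₁) + σ(O, P₂)`, hence
`d_H(P₁, P₂) ≤ max d_H(O, Pᵢ) + 2 log 2`. For `z ∈ [P₁, P₂]` the triangle inequality turns this
into `min d_H(O, Pᵢ) ≤ 2 d_H(O, z) + 2 log 2`, so `c = log 2` works. -/

open Real Metric

section UnitBall

variable {V : Type*} [NormedAddCommGroup V]

def sinhHalfDist (x y : V) : ℝ := dist x y / √((1 - ‖x‖ ^ 2) * (1 - ‖y‖ ^ 2))

lemma sinhHalfDist_nonneg (x y : V) : 0 ≤ sinhHalfDist x y := by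
  unfold sinhHalfDist; positivity

lemma sinhHalfDist_comm (x y : V) : sinhHalfDist x y = sinhHalfDist y x := by
  rw [sinhHalfDist, sinhHalfDist, dist_comm, mul_comm]

lemma sinhHalfDist_zero_left (y : V) : sinhHalfDist 0 y = ‖y‖ / √(1 - ‖y‖ ^ 2) := by
  simp [sinhHalfDist]

lemma sinhHalfDist_eq_div {x : V} (hx : ‖x‖ ≤ 1) (y : V) :
    sinhHalfDist x y = dist x y / (√(1 - ‖x‖ ^ 2) * √(1 - ‖y‖ ^ 2)) := by
  rw [sinhHalfDist, sqrt_mul (by nlinarith [norm_nonneg x])]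

lemma sqrt_one_add_sinhHalfDist_sq_mul {x y : V} (hx : ‖x‖ < 1) (hy : ‖y‖ < 1) :
    √(1 + sinhHalfDist x y ^ 2) * (√(1 - ‖x‖ ^ 2) * √(1 - ‖y‖ ^ 2))
      = √((1 - ‖x‖ ^ 2) * (1 - ‖y‖ ^ 2) + dist x y ^ 2) := by
  have hx' : 0 < 1 - ‖x‖ ^ 2 := by nlinarith [norm_nonneg x]
  have hy' : 0 < 1 - ‖y‖ ^ 2 := by nlinarith [norm_nonneg y]
  rw [← sqrt_mul hx'.le, ← sqrt_mul (by positivity), sinhHalfDist, div_pow,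
    sq_sqrt (by positivity), add_mul, one_mul, div_mul_cancel₀ _ (by positivity)]

variable [InnerProductSpace ℝ V]

lemma norm_mul_dist_inv_smul {z : V} (hz : z ≠ 0) (x : V) :
    ‖z‖ * dist x ((‖z‖ ^ 2)⁻¹ • z) = √((1 - ‖x‖ ^ 2) * (1 - ‖z‖ ^ 2) + dist x z ^ 2) := by
  have hz' : ‖z‖ ≠ 0 := norm_ne_zero_iff.mpr hz
  rw [← sqrt_sq (by positivity : 0 ≤ ‖z‖ * dist x ((‖z‖ ^ 2)⁻¹ • z))]
  congr 1
  rw [mul_pow, dist_eq_norm, dist_eq_norm, norm_sub_sq_real, norm_sub_sq_real,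
    real_inner_smul_right, norm_smul, norm_inv, norm_pow, norm_norm]
  field_simp
  ring

/-- Ptolemy's inequality for `x, z, y` and `z / ‖z‖²`. -/
lemma dist_mul_one_sub_norm_sq_le (x y z : V) :
    dist x y * (1 - ‖z‖ ^ 2)
      ≤ dist x z * √((1 - ‖z‖ ^ 2) * (1 - ‖y‖ ^ 2) + dist z y ^ 2)
        + dist z y * √((1 - ‖x‖ ^ 2) * (1 - ‖z‖ ^ 2) + dist x z ^ 2) := by
  rcases eq_or_ne z 0 with rfl | hz
  · simpa using dist_triangle x 0 y
  set w := (‖z‖ ^ 2)⁻¹ • z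
  have hzw : ‖z‖ * dist z w = |1 - ‖z‖ ^ 2| := by
    rw [norm_mul_dist_inv_smul hz, dist_self, zero_pow two_ne_zero, add_zero, ← sq,
      sqrt_sq_eq_abs]
  have hyw : ‖z‖ * dist y w = √((1 - ‖z‖ ^ 2) * (1 - ‖y‖ ^ 2) + dist z y ^ 2) := by
    rw [norm_mul_dist_inv_smul hz, mul_comm (1 - ‖y‖ ^ 2), dist_comm y]
  rw [← hyw, ← norm_mul_dist_inv_smul hz]
  calc dist x y * (1 - ‖z‖ ^ 2) ≤ dist x y * (‖z‖ * dist z w) := by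
        rw [hzw]; exact mul_le_mul_of_nonneg_left (le_abs_self _) dist_nonneg
    _ = ‖z‖ * (dist x y * dist z w) := by ring
    _ ≤ ‖z‖ * (dist x z * dist y w + dist z y * dist x w) :=
        mul_le_mul_of_nonneg_left (EuclideanGeometry.mul_dist_le_mul_dist_add_mul_dist x z y w)
          (norm_nonneg z)
    _ = dist x z * (‖z‖ * dist y w) + dist z y * (‖z‖ * dist x w) := by ring

lemma sinhHalfDist_le {x y z : V} (hx : ‖x‖ < 1) (hy : ‖y‖ < 1) (hz : ‖z‖ < 1) :
    sinhHalfDist x y ≤ sinhHalfDist x z * √(1 + sinhHalfDist z y ^ 2)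
      + √(1 + sinhHalfDist x z ^ 2) * sinhHalfDist z y := by
  have hsx : 0 < √(1 - ‖x‖ ^ 2) := sqrt_pos.mpr (by nlinarith [norm_nonneg x])
  have hsy : 0 < √(1 - ‖y‖ ^ 2) := sqrt_pos.mpr (by nlinarith [norm_nonneg y])
  have hsz : 0 < √(1 - ‖z‖ ^ 2) := sqrt_pos.mpr (by nlinarith [norm_nonneg z])
  have hptolemy := dist_mul_one_sub_norm_sq_le x y z
  rw [← sqrt_one_add_sinhHalfDist_sq_mul hz hy, ← sqrt_one_add_sinhHalfDist_sq_mul hx hz]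
    at hptolemy
  set a := √(1 + sinhHalfDist z y ^ 2)
  set b := √(1 + sinhHalfDist x z ^ 2)
  rw [sinhHalfDist_eq_div hx.le, sinhHalfDist_eq_div hx.le, sinhHalfDist_eq_div hz.le,
    div_le_iff₀ (by positivity)]
  set sx := √(1 - ‖x‖ ^ 2)
  set sy := √(1 - ‖y‖ ^ 2)
  set sz := √(1 - ‖z‖ ^ 2)
  have hzz : sz * sz = 1 - ‖z‖ ^ 2 := mul_self_sqrt (by nlinarith [norm_nonneg z])
  have hrhs : (dist x z / (sx * sz) * a + b * (dist z y / (sz * sy))) * (sx * sy)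
      = (dist x z * (a * (sz * sy)) + dist z y * (b * (sx * sz))) / (1 - ‖z‖ ^ 2) := by
    rw [← hzz]; field_simp
  rw [hrhs, le_div_iff₀ (by nlinarith [norm_nonneg z])]
  exact hptolemy

lemma arsinh_sinhHalfDist_le {x y z : V} (hx : ‖x‖ < 1) (hy : ‖y‖ < 1) (hz : ‖z‖ < 1) :
    arsinh (sinhHalfDist x y) ≤ arsinh (sinhHalfDist x z) + arsinh (sinhHalfDist z y) := by
  rw [← sinh_le_sinh, sinh_arsinh, sinh_add, sinh_arsinh, sinh_arsinh, cosh_arsinh, cosh_arsinh]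
  exact sinhHalfDist_le hx hy hz

/-- For a unit vector `ξ`, the horoball at `ξ` whose boundary passes through `0`. -/
def horoballThroughOrigin (ξ : V) : Set V := closedBall ((2⁻¹ : ℝ) • ξ) 2⁻¹

lemma dist_sq_le_of_mem_horoballThroughOrigin {ξ P : V} (hξ : ‖ξ‖ = 1)
    (hP : P ∈ horoballThroughOrigin ξ) : dist P ξ ^ 2 ≤ 1 - ‖P‖ ^ 2 := by
  rw [horoballThroughOrigin, mem_closedBall, dist_eq_norm] at hP
  have hP2 : ‖P - (2⁻¹ : ℝ) • ξ‖ ^ 2 ≤ (2⁻¹) ^ 2 := by gcongr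
  rw [norm_sub_sq_real, real_inner_smul_right, norm_smul, hξ] at hP2
  rw [dist_eq_norm, norm_sub_sq_real, hξ]
  norm_num at hP2
  linarith

lemma sinhHalfDist_le_add_of_mem_horoballThroughOrigin {ξ P₁ P₂ : V} (hξ : ‖ξ‖ = 1)
    (h₁ : P₁ ∈ horoballThroughOrigin ξ) (h₂ : P₂ ∈ horoballThroughOrigin ξ)
    (hP₁ : ‖P₁‖ < 1) (hP₂ : ‖P₂‖ < 1) :
    sinhHalfDist P₁ P₂ ≤ sinhHalfDist 0 P₁ + sinhHalfDist 0 P₂ := by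
  have hs₁ : 0 < √(1 - ‖P₁‖ ^ 2) := sqrt_pos.mpr (by nlinarith [norm_nonneg P₁])
  have hs₂ : 0 < √(1 - ‖P₂‖ ^ 2) := sqrt_pos.mpr (by nlinarith [norm_nonneg P₂])
  have hd₁ := le_sqrt_of_sq_le (dist_sq_le_of_mem_horoballThroughOrigin hξ h₁)
  have hd₂ := le_sqrt_of_sq_le (dist_sq_le_of_mem_horoballThroughOrigin hξ h₂)
  have hptolemy := EuclideanGeometry.mul_dist_le_mul_dist_add_mul_dist P₁ 0 P₂ ξ
  rw [dist_zero_left, hξ, mul_one, dist_zero_right, dist_zero_left] at hptolemy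
  have hdist : dist P₁ P₂ ≤ ‖P₁‖ * √(1 - ‖P₂‖ ^ 2) + ‖P₂‖ * √(1 - ‖P₁‖ ^ 2) := by
    nlinarith [norm_nonneg P₁, norm_nonneg P₂]
  rw [sinhHalfDist_eq_div hP₁.le, sinhHalfDist_zero_left, sinhHalfDist_zero_left,
    div_add_div _ _ hs₁.ne' hs₂.ne']
  gcongr
  linarith

lemma closedBall_smul_subset_horoballThroughOrigin {ξ : V} (hξ : ‖ξ‖ = 1) {r : ℝ}
    (hr : r ≤ 2⁻¹) :
    closedBall ((1 - r) • ξ) r ⊆ horoballThroughOrigin ξ := by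
  unfold horoballThroughOrigin
  apply closedBall_subset_closedBall'
  rw [dist_eq_norm, ← sub_smul, norm_smul, hξ, mul_one, norm_eq_abs, abs_of_nonneg (by linarith)]
  linarith

end UnitBall

lemma arsinh_two_mul_le (t : ℝ) : arsinh (2 * t) ≤ arsinh t + log 2 := by
  rw [← sinh_le_sinh, sinh_arsinh, sinh_add, sinh_arsinh, sinh_log two_pos, cosh_log two_pos]
  have := sinh_lt_cosh (arsinh t)
  rw [sinh_arsinh, cosh_arsinh] at this
  norm_num
  linarith

lemma arsinh_add_le_max (a b : ℝ) : arsinh (a + b) ≤ max (arsinh a) (arsinh b) + log 2 :=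
  calc arsinh (a + b) ≤ arsinh (2 * max a b) :=
        arsinh_le_arsinh.mpr (by linarith [le_max_left a b, le_max_right a b])
    _ ≤ arsinh (max a b) + log 2 := arsinh_two_mul_le _
    _ = max (arsinh a) (arsinh b) + log 2 := by rw [arsinh_strictMono.monotone.map_max]

lemma mem_ball3 {x : E3} : x ∈ ball3 ↔ ‖x‖ < 1 := mem_ball_zero_iff

lemma hDist_eq (x y : E3) : hDist x y = 2 * arsinh (sinhHalfDist x y) := rfl

lemma hDist_nonneg (x y : E3) : 0 ≤ hDist x y := by
  rw [hDist_eq]; have := arsinh_nonneg_iff.mpr (sinhHalfDist_nonneg x y); positivity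

lemma hDist_comm (x y : E3) : hDist x y = hDist y x := by
  rw [hDist_eq, hDist_eq, sinhHalfDist_comm]

lemma hDist_triangle {x y z : E3} (hx : ‖x‖ < 1) (hy : ‖y‖ < 1) (hz : ‖z‖ < 1) :
    hDist x y ≤ hDist x z + hDist z y := by
  simp only [hDist_eq]; linarith [arsinh_sinhHalfDist_le hx hy hz]

lemma hDist_le_max_add_of_mem_horoballThroughOrigin {ξ P₁ P₂ : E3} (hξ : ‖ξ‖ = 1)
    (h₁ : P₁ ∈ horoballThroughOrigin ξ) (h₂ : P₂ ∈ horoballThroughOrigin ξ)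
    (hP₁ : ‖P₁‖ < 1) (hP₂ : ‖P₂‖ < 1) :
    hDist P₁ P₂ ≤ max (hDist 0 P₁) (hDist 0 P₂) + 2 * log 2 := by
  simp only [hDist_eq]
  rw [← mul_max_of_nonneg _ _ two_pos.le]
  have hσ := sinhHalfDist_le_add_of_mem_horoballThroughOrigin hξ h₁ h₂ hP₁ hP₂
  linarith [arsinh_le_arsinh.mpr hσ, arsinh_add_le_max (sinhHalfDist 0 P₁) (sinhHalfDist 0 P₂)]

lemma Horoball.isClosed {H : Set E3} (hH : Horoball H) : IsClosed H := by
  obtain ⟨c, r, -, -, rfl⟩ := hH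
  exact isClosed_closedBall

lemma Horoball.subset_horoballThroughOrigin {H : Set E3} (hH : Horoball H)
    (h0 : (0 : E3) ∉ interior H) : ∃ ξ : E3, ‖ξ‖ = 1 ∧ H ⊆ horoballThroughOrigin ξ := by
  obtain ⟨c, r, hr, hc, rfl⟩ := hH
  rw [interior_closedBall', mem_ball, dist_zero_left, hc, not_lt] at h0
  have hr' : 1 - r ≠ 0 := by linarith
  have hξ : ‖(1 - r)⁻¹ • c‖ = 1 := by
    rw [norm_smul, norm_inv, hc, norm_eq_abs, abs_of_pos (by linarith), inv_mul_cancel₀ hr']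
  refine ⟨(1 - r)⁻¹ • c, hξ, ?_⟩
  conv_lhs => rw [← smul_inv_smul₀ hr' c]
  exact closedBall_smul_subset_horoballThroughOrigin hξ (by linarith)

/-- There is a universal `c > 0` such that if `H` is a horoball whose
interior does not contain the centre `O = 0`, and `P₁, P₂ ∈ ∂H` lie outside the
hyperbolic `N`-ball about `O`, then the geodesic segment `[P₁,P₂]` lies outside the
hyperbolic ball of radius `N/4 - c` about `O`. -/
theorem stmt6 :
    ∃ c : ℝ, 0 < c ∧ ∀ (N : ℝ) (H : Set E3) (P₁ P₂ : E3),
      Horoball H → (0 : E3) ∉ interior H →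
      P₁ ∈ frontier H ∩ ball3 → P₂ ∈ frontier H ∩ ball3 →
      N ≤ hDist 0 P₁ → N ≤ hDist 0 P₂ →
      ∀ z ∈ hSeg P₁ P₂, N / 4 - c ≤ hDist 0 z := by
  refine ⟨log 2, log_pos one_lt_two, ?_⟩
  rintro N H P₁ P₂ hH h0 ⟨hP₁H, hP₁⟩ ⟨hP₂H, hP₂⟩ hN₁ hN₂ z ⟨hz, hseg⟩
  rw [mem_ball3] at hP₁ hP₂ hz
  obtain ⟨ξ, hξ, hHξ⟩ := hH.subset_horoballThroughOrigin h0
  have h₁₂ := hDist_le_max_add_of_mem_horoballThroughOrigin hξ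
    (hHξ (hH.isClosed.frontier_subset hP₁H)) (hHξ (hH.isClosed.frontier_subset hP₂H)) hP₁ hP₂
  have htri₁ := hDist_triangle (x := 0) (norm_zero.trans_lt one_pos) hP₁ hz
  have htri₂ := hDist_triangle (x := 0) (norm_zero.trans_lt one_pos) hP₂ hz
  rw [hDist_comm z P₁] at htri₁
  linarith [min_add_max (hDist 0 P₁) (hDist 0 P₂), le_min hN₁ hN₂, hDist_nonneg 0 z,
    log_pos one_lt_two]

end
end

section
/- Fix R₀ > 0. There exists a constant c > 0 such that: if T is an equidistant tube of radius R ≥ R₀ around a geodesic L in the ball model of hyperbolic 3-space, the center O is not in the interior of T, the points P₁, P₂ ∈ ∂T lie outside B_H(O; N), and there exists a path on ∂T joining P₁ to P₂ which stays outside B_H(O; N), then the hyperbolic geodesic segment [P₁, P₂] lies outside B_H(O; N/4 − c). -/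
open Filter Set
open scoped ENNReal

noncomputable section

/-!
In the hyperboloid model `cosh` of the distance is a Minkowski product, and a reversed
Cauchy–Schwarz inequality gives the triangle inequality. A unit-speed geodesic is
`t ↦ cosh t • A + sinh t • V`, and every point decomposes as `cosh ρ • G + n`, with `G` its foot
on the axis, `ρ` its distance to the axis and `n` spacelike and orthogonal to the axis; this
compares distances with the axial coordinates up to additive constants.

If `z ∈ [P₁, P₂]` were within `N/4` of `O`, the triangle inequality would put `z` at distance
about `3N/4` from both endpoints. Segments between points of `∂T` converge exponentially to the
axis, so `z` is near the axis, hence so is `O`, and `R < N/4`. The feet of `P₁, P₂` on the axis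
are then far from that of `O` and on the same side of it, because the path on `∂T` cannot cross
the plane through `O` orthogonal to `L` outside the `N`-ball. Comparing `d(P₁, P₂)` with
`d(O, P₁) + d(O, P₂)` through the axial coordinates then gives `d(O, z) ≥ N - 3R - 2`.
-/

namespace HyperbolicTube

open Real

section RealBounds

lemma exp_div_two_le_cosh (x : ℝ) : exp x / 2 ≤ cosh x := by
  rw [cosh_eq]; linarith [exp_pos (-x)]

lemma sinh_le_exp_div_two (x : ℝ) : sinh x ≤ exp x / 2 := by
  rw [sinh_eq]; linarith [exp_pos (-x)]

lemma cosh_le_exp {x : ℝ} (hx : 0 ≤ x) : cosh x ≤ exp x := by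
  rw [cosh_eq]; linarith [exp_le_exp.mpr (neg_le_self hx)]

lemma exp_le_sinh_add_one {s : ℝ} (hs : 0 ≤ s) : exp s ≤ sinh (s + 1) := by
  have h1 : exp (-(s + 1)) ≤ exp (-1) := exp_le_exp.mpr (by linarith)
  have h2 : exp (s + 1) = exp s * exp 1 := exp_add s 1
  have h3 : 1 ≤ exp s := one_le_exp hs
  rw [sinh_eq, h2]
  nlinarith [exp_neg_one_lt_half, exp_one_gt_d9]

lemma exp_mul_sinh_le_sinh_add {a : ℝ} (ha : 0 ≤ a) (b : ℝ) : exp a * sinh b ≤ sinh (a + b) := by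
  rw [sinh_add, ← cosh_add_sinh]
  nlinarith [sinh_nonneg_iff.mpr ha, exp_pos (-b), cosh_sub_sinh b]

lemma exp_min_mul_sinh_add_sinh_le {a b : ℝ} (ha : 0 ≤ a) (hb : 0 ≤ b) :
    exp (min a b) * (sinh a + sinh b) ≤ 2 * sinh (a + b) := by
  have h₁ : exp (min a b) * sinh a ≤ exp b * sinh a :=
    mul_le_mul_of_nonneg_right (exp_le_exp.mpr (min_le_right a b)) (sinh_nonneg_iff.mpr ha)
  have h₂ : exp (min a b) * sinh b ≤ exp a * sinh b :=
    mul_le_mul_of_nonneg_right (exp_le_exp.mpr (min_le_left a b)) (sinh_nonneg_iff.mpr hb)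
  have h₃ := exp_mul_sinh_le_sinh_add hb a
  have h₄ := exp_mul_sinh_le_sinh_add ha b
  rw [add_comm b a] at h₃
  linarith

lemma le_add_two_of_exp_le {x y : ℝ} (h : exp x ≤ 4 * exp y) : x ≤ y + 2 := by
  have h4 : (4 : ℝ) ≤ exp 2 := by
    have : exp 2 = exp 1 * exp 1 := by rw [← exp_add]; norm_num
    nlinarith [exp_one_gt_d9]
  rw [← exp_le_exp, exp_add]
  nlinarith [exp_pos y]

lemma le_of_cosh_le_cosh {x y : ℝ} (hx : 0 ≤ x) (hy : 0 ≤ y) (h : cosh x ≤ cosh y) : x ≤ y := by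
  simpa only [abs_of_nonneg hx, abs_of_nonneg hy] using cosh_le_cosh.mp h

lemma abs_sub_le_of_mul_pos {s₁ s₂ k : ℝ} (hs : 0 < s₁ * s₂) (h₁ : k ≤ |s₁|) (h₂ : k ≤ |s₂|) :
    |s₁ - s₂| ≤ |s₁| + |s₂| - 2 * k := by
  rw [abs_sub_le_iff]
  rcases mul_pos_iff.mp hs with ⟨hs₁, hs₂⟩ | ⟨hs₁, hs₂⟩
  · rw [abs_of_pos hs₁, abs_of_pos hs₂] at *
    constructor <;> linarith
  · rw [abs_of_neg hs₁, abs_of_neg hs₂] at *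
    constructor <;> linarith

end RealBounds

section Minkowski

def mink (X Y : ℝ × E3) : ℝ := X.1 * Y.1 - inner ℝ X.2 Y.2

lemma mink_comm (X Y : ℝ × E3) : mink X Y = mink Y X := by
  simp only [mink, real_inner_comm, mul_comm]

@[simp] lemma mink_add_left (X Y Z : ℝ × E3) : mink (X + Y) Z = mink X Z + mink Y Z := by
  simp only [mink, Prod.fst_add, Prod.snd_add, inner_add_left]; ring

@[simp] lemma mink_sub_left (X Y Z : ℝ × E3) : mink (X - Y) Z = mink X Z - mink Y Z := by
  simp only [mink, Prod.fst_sub, Prod.snd_sub, inner_sub_left]; ring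

@[simp] lemma mink_smul_left (r : ℝ) (X Z : ℝ × E3) : mink (r • X) Z = r * mink X Z := by
  simp only [mink, Prod.smul_fst, Prod.smul_snd, real_inner_smul_left, smul_eq_mul]; ring

@[simp] lemma mink_add_right (X Y Z : ℝ × E3) : mink X (Y + Z) = mink X Y + mink X Z := by
  rw [mink_comm, mink_add_left, mink_comm Y, mink_comm Z]

@[simp] lemma mink_sub_right (X Y Z : ℝ × E3) : mink X (Y - Z) = mink X Y - mink X Z := by
  rw [mink_comm, mink_sub_left, mink_comm Y, mink_comm Z]

@[simp] lemma mink_smul_right (r : ℝ) (X Z : ℝ × E3) : mink X (r • Z) = r * mink X Z := by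
  rw [mink_comm, mink_smul_left, mink_comm]

lemma continuous_mink_left (A : ℝ × E3) : Continuous fun X => mink X A := by
  unfold mink; fun_prop

variable {A X Y : ℝ × E3}

lemma sq_fst_mul_mink_self_le (hA : mink A A = 1) (hX : mink X A = 0) :
    A.1 ^ 2 * mink X X ≤ -‖X.2‖ ^ 2 := by
  simp only [mink, real_inner_self_eq_norm_sq] at hA hX ⊢
  have hCS := real_inner_mul_inner_self_le X.2 A.2
  rw [real_inner_self_eq_norm_sq, real_inner_self_eq_norm_sq, ← sub_eq_zero.mp hX] at hCS
  have hA₁ : A.1 ^ 2 = 1 + ‖A.2‖ ^ 2 := by linarith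
  rw [hA₁]
  nlinarith

lemma mink_self_nonpos_of_orthogonal (hA : mink A A = 1) (hX : mink X A = 0) : mink X X ≤ 0 := by
  have h := sq_fst_mul_mink_self_le hA hX
  have hA1 : 1 ≤ A.1 ^ 2 := by
    simp only [mink, real_inner_self_eq_norm_sq] at hA; nlinarith [sq_nonneg ‖A.2‖]
  nlinarith [sq_nonneg ‖X.2‖]

lemma eq_zero_of_orthogonal_of_mink_self_eq_zero (hA : mink A A = 1) (hX : mink X A = 0)
    (hXX : mink X X = 0) : X = 0 := by
  have h := sq_fst_mul_mink_self_le hA hX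
  rw [hXX, mul_zero, le_neg, neg_zero] at h
  have hX₂ : X.2 = 0 := norm_eq_zero.mp (by nlinarith [norm_nonneg X.2])
  have hA₁ : A.1 ≠ 0 := by
    rintro h0; simp only [mink, h0, real_inner_self_eq_norm_sq] at hA; nlinarith [sq_nonneg ‖A.2‖]
  have hX₁ : X.1 = 0 := by
    simpa [mink, hX₂, hA₁] using hX
  exact Prod.ext hX₁ hX₂

/-- Reversed Cauchy–Schwarz: the orthogonal complement of a unit timelike vector is
negative definite. -/
lemma mink_sq_le_of_orthogonal (hA : mink A A = 1) (hX : mink X A = 0) (hY : mink Y A = 0) :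
    mink X Y ^ 2 ≤ mink X X * mink Y Y := by
  have hquad : ∀ s : ℝ,
      0 ≤ (-mink Y Y) * (s * s) + (-(2 * mink X Y)) * s + (-mink X X) := by
    intro s
    have h := mink_self_nonpos_of_orthogonal hA (X := X + s • Y) (by simp [hX, hY])
    simp only [mink_add_left, mink_add_right, mink_smul_left, mink_smul_right,
      mink_comm Y X] at h
    linarith
  have h := discrim_le_zero hquad
  rw [discrim] at h
  linarith

end Minkowski

section Hyperboloid

def toHyperboloid (x : E3) : ℝ × E3 :=
  ((1 + ‖x‖ ^ 2) / (1 - ‖x‖ ^ 2), (2 / (1 - ‖x‖ ^ 2)) • x)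

lemma one_sub_norm_sq_pos {x : E3} (hx : x ∈ ball3) : 0 < 1 - ‖x‖ ^ 2 := by
  have : ‖x‖ < 1 := by simpa [ball3] using hx
  nlinarith [norm_nonneg x]

lemma hDist_comm (x y : E3) : hDist x y = hDist y x := by
  simp only [hDist, dist_comm, mul_comm (1 - ‖x‖ ^ 2)]

lemma hDist_nonneg (x y : E3) : 0 ≤ hDist x y :=
  mul_nonneg zero_le_two (arsinh_nonneg_iff.mpr (div_nonneg dist_nonneg (sqrt_nonneg _)))

lemma cosh_hDist {x y : E3} (hx : x ∈ ball3) (hy : y ∈ ball3) :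
    cosh (hDist x y) = mink (toHyperboloid x) (toHyperboloid y) := by
  have hx' := one_sub_norm_sq_pos hx
  have hy' := one_sub_norm_sq_pos hy
  have h1 : cosh (hDist x y) = 1 + 2 * (dist x y ^ 2 / ((1 - ‖x‖ ^ 2) * (1 - ‖y‖ ^ 2))) := by
    rw [hDist, cosh_two_mul, cosh_arsinh, sinh_arsinh, sq_sqrt (by positivity), div_pow,
      sq_sqrt (by positivity)]
    ring
  have h2 : dist x y ^ 2 = ‖x‖ ^ 2 - 2 * inner ℝ x y + ‖y‖ ^ 2 := by
    rw [dist_eq_norm]; exact norm_sub_sq_real x y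
  rw [h1, h2]
  simp only [mink, toHyperboloid, real_inner_smul_left, real_inner_smul_right]
  field_simp
  ring

lemma mink_toHyperboloid_self {x : E3} (hx : x ∈ ball3) :
    mink (toHyperboloid x) (toHyperboloid x) = 1 := by
  rw [← cosh_hDist hx hx]; simp [hDist]

lemma hDist_triangle {x y z : E3} (hx : x ∈ ball3) (hy : y ∈ ball3) (hz : z ∈ ball3) :
    hDist x z ≤ hDist x y + hDist y z := by
  set X := toHyperboloid x
  set Y := toHyperboloid y
  set Z := toHyperboloid z
  have hXX : mink X X = 1 := mink_toHyperboloid_self hx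
  have hYY : mink Y Y = 1 := mink_toHyperboloid_self hy
  have hZZ : mink Z Z = 1 := mink_toHyperboloid_self hz
  have hXY : mink X Y = cosh (hDist x y) := (cosh_hDist hx hy).symm
  have hZY : mink Z Y = cosh (hDist y z) := by rw [mink_comm]; exact (cosh_hDist hy hz).symm
  have hCS := mink_sq_le_of_orthogonal hYY (X := X - cosh (hDist x y) • Y)
    (Y := Z - cosh (hDist y z) • Y) (by simp [hXY, hYY]) (by simp [hZY, hYY])
  simp only [mink_sub_left, mink_sub_right, mink_smul_left, mink_smul_right, hXX, hYY, hZZ, hXY,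
    hZY, mink_comm Y X, mink_comm Y Z] at hCS
  have hbound : mink X Z - cosh (hDist x y) * cosh (hDist y z)
      ≤ sinh (hDist x y) * sinh (hDist y z) := by
    refine (abs_le_of_sq_le_sq' ?_ ?_).2
    · nlinarith [cosh_sq' (hDist x y), cosh_sq' (hDist y z)]
    · exact mul_nonneg (sinh_nonneg_iff.mpr (hDist_nonneg x y))
        (sinh_nonneg_iff.mpr (hDist_nonneg y z))
  refine le_of_cosh_le_cosh (hDist_nonneg x z) (add_nonneg (hDist_nonneg x y) (hDist_nonneg y z)) ?_
  rw [cosh_hDist hx hz, cosh_add]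
  linarith

lemma continuousOn_toHyperboloid : ContinuousOn toHyperboloid ball3 := by
  have h : ∀ x ∈ ball3, 1 - ‖x‖ ^ 2 ≠ 0 := fun x hx => (one_sub_norm_sq_pos hx).ne'
  unfold toHyperboloid
  fun_prop (disch := assumption)

end Hyperboloid

section Frame

def IsUnitSpeedGeodesic (γ : ℝ → E3) : Prop :=
  (∀ t, γ t ∈ ball3) ∧ ∀ s t, hDist (γ s) (γ t) = |s - t|

def frameBase (γ : ℝ → E3) : ℝ × E3 := toHyperboloid (γ 0)

def frameDir (γ : ℝ → E3) : ℝ × E3 :=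
  (sinh 1)⁻¹ • (toHyperboloid (γ 1) - cosh 1 • toHyperboloid (γ 0))

variable {γ : ℝ → E3} (hγ : IsUnitSpeedGeodesic γ)
include hγ

lemma mink_toHyperboloid_geodesic (s t : ℝ) :
    mink (toHyperboloid (γ s)) (toHyperboloid (γ t)) = cosh (s - t) := by
  rw [← cosh_hDist (hγ.1 s) (hγ.1 t), hγ.2 s t, cosh_abs]

lemma mink_geodesic_frameBase (t : ℝ) : mink (toHyperboloid (γ t)) (frameBase γ) = cosh t := by
  simpa [frameBase] using mink_toHyperboloid_geodesic hγ t 0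

lemma mink_geodesic_frameDir (t : ℝ) : mink (toHyperboloid (γ t)) (frameDir γ) = -sinh t := by
  have h1 : sinh 1 ≠ 0 := (sinh_pos_iff.mpr one_pos).ne'
  simp only [frameDir, mink_smul_right, mink_sub_right, mink_toHyperboloid_geodesic hγ, cosh_sub,
    sub_zero]
  field_simp
  ring

lemma mink_frameBase_self : mink (frameBase γ) (frameBase γ) = 1 := by
  simpa [frameBase] using mink_geodesic_frameBase hγ 0

lemma mink_frameBase_frameDir : mink (frameBase γ) (frameDir γ) = 0 := by
  simpa [frameBase] using mink_geodesic_frameDir hγ 0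

lemma mink_frameDir_self : mink (frameDir γ) (frameDir γ) = -1 := by
  have h1 : sinh 1 ≠ 0 := (sinh_pos_iff.mpr one_pos).ne'
  conv_lhs => enter [2]; rw [frameDir]
  rw [mink_smul_right, mink_sub_right, mink_smul_right, mink_comm, mink_geodesic_frameDir hγ,
    mink_comm, mink_geodesic_frameDir hγ, sinh_zero, neg_zero, mul_zero, sub_zero]
  field_simp

lemma toHyperboloid_geodesic (t : ℝ) :
    toHyperboloid (γ t) = cosh t • frameBase γ + sinh t • frameDir γ := by
  have hBB := mink_frameBase_self hγ
  have hBD := mink_frameBase_frameDir hγ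
  have hDD := mink_frameDir_self hγ
  set W := toHyperboloid (γ t) - (cosh t • frameBase γ + sinh t • frameDir γ)
  have hWB : mink W (frameBase γ) = 0 := by
    simp [W, mink_geodesic_frameBase hγ, hBB, mink_comm (frameDir γ), hBD]
  have hWW : mink W W = 0 := by
    simp only [W, mink_sub_left, mink_sub_right, mink_add_left, mink_add_right, mink_smul_left,
      mink_smul_right, mink_toHyperboloid_self (hγ.1 t), mink_geodesic_frameBase hγ,
      mink_geodesic_frameDir hγ, mink_comm (frameBase γ) (toHyperboloid (γ t)),
      mink_comm (frameDir γ), hBB, hBD, hDD]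
    nlinarith [cosh_sq' t]
  exact sub_eq_zero.mp (eq_zero_of_orthogonal_of_mink_self_eq_zero hBB hWB hWW)

end Frame

section Axis

/-- The `+` sign is because `frameDir γ` has Minkowski square `-1`. -/
def normalPart (γ : ℝ → E3) (X : ℝ × E3) : ℝ × E3 :=
  X - mink X (frameBase γ) • frameBase γ + mink X (frameDir γ) • frameDir γ

def axisCosh (γ : ℝ → E3) (x : E3) : ℝ :=
  √(mink (toHyperboloid x) (frameBase γ) ^ 2 - mink (toHyperboloid x) (frameDir γ) ^ 2)

/-- The parameter of the point of `γ` nearest to `x`. -/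
def axisFoot (γ : ℝ → E3) (x : E3) : ℝ :=
  arsinh (-mink (toHyperboloid x) (frameDir γ) / axisCosh γ x)

def axisDist (γ : ℝ → E3) (x : E3) : ℝ := hDist x (γ (axisFoot γ x))

lemma axisDist_nonneg (γ : ℝ → E3) (x : E3) : 0 ≤ axisDist γ x := hDist_nonneg _ _

lemma normalPart_add (γ : ℝ → E3) (X Y : ℝ × E3) :
    normalPart γ (X + Y) = normalPart γ X + normalPart γ Y := by
  simp only [normalPart, mink_add_left, add_smul]; abel

lemma normalPart_smul (γ : ℝ → E3) (r : ℝ) (X : ℝ × E3) :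
    normalPart γ (r • X) = r • normalPart γ X := by
  simp only [normalPart, mink_smul_left, smul_add, smul_sub, smul_smul]

lemma continuousOn_axisCosh (γ : ℝ → E3) : ContinuousOn (axisCosh γ) ball3 := by
  have hB := (continuous_mink_left (frameBase γ)).comp_continuousOn continuousOn_toHyperboloid
  have hD := (continuous_mink_left (frameDir γ)).comp_continuousOn continuousOn_toHyperboloid
  exact continuous_sqrt.comp_continuousOn ((hB.pow 2).sub (hD.pow 2))

variable {γ : ℝ → E3} (hγ : IsUnitSpeedGeodesic γ)
include hγ

lemma mink_normalPart_frameBase (X : ℝ × E3) : mink (normalPart γ X) (frameBase γ) = 0 := by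
  simp [normalPart, mink_frameBase_self hγ, mink_comm (frameDir γ), mink_frameBase_frameDir hγ]

lemma mink_normalPart_frameDir (X : ℝ × E3) : mink (normalPart γ X) (frameDir γ) = 0 := by
  simp [normalPart, mink_frameDir_self hγ, mink_frameBase_frameDir hγ]

lemma mink_normalPart_geodesic (X : ℝ × E3) (t : ℝ) :
    mink (normalPart γ X) (toHyperboloid (γ t)) = 0 := by
  simp [toHyperboloid_geodesic hγ, mink_normalPart_frameBase hγ, mink_normalPart_frameDir hγ]

section Point

variable {x : E3} (hx : x ∈ ball3)
include hx

lemma one_le_sq_mink_frameBase_sub_sq_mink_frameDir :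
    1 ≤ mink (toHyperboloid x) (frameBase γ) ^ 2 - mink (toHyperboloid x) (frameDir γ) ^ 2 := by
  set X := toHyperboloid x
  have hXX : mink X X = 1 := mink_toHyperboloid_self hx
  have h := mink_self_nonpos_of_orthogonal (mink_frameBase_self hγ)
    (mink_normalPart_frameBase hγ X)
  simp only [normalPart, mink_sub_left, mink_sub_right, mink_add_left, mink_add_right,
    mink_smul_left, mink_smul_right, hXX, mink_frameBase_self hγ, mink_frameDir_self hγ,
    mink_frameBase_frameDir hγ, mink_comm (frameDir γ) (frameBase γ), mink_comm (frameBase γ) X,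
    mink_comm (frameDir γ) X] at h
  nlinarith

lemma axisCosh_sq :
    axisCosh γ x ^ 2
      = mink (toHyperboloid x) (frameBase γ) ^ 2 - mink (toHyperboloid x) (frameDir γ) ^ 2 :=
  sq_sqrt (by linarith [one_le_sq_mink_frameBase_sub_sq_mink_frameDir hγ hx])

lemma one_le_axisCosh : 1 ≤ axisCosh γ x := by
  rw [axisCosh, ← sqrt_one]
  exact sqrt_le_sqrt (one_le_sq_mink_frameBase_sub_sq_mink_frameDir hγ hx)

lemma axisCosh_mul_cosh_axisFoot :
    axisCosh γ x * cosh (axisFoot γ x) = mink (toHyperboloid x) (frameBase γ) := by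
  have hK := one_le_axisCosh hγ hx
  have hp : 0 ≤ mink (toHyperboloid x) (frameBase γ) := by
    rw [frameBase, ← cosh_hDist hx (hγ.1 0)]; exact (cosh_pos _).le
  have hsq : axisCosh γ x ^ 2 * (1 + (-mink (toHyperboloid x) (frameDir γ) / axisCosh γ x) ^ 2)
      = mink (toHyperboloid x) (frameBase γ) ^ 2 := by
    field_simp
    linarith [axisCosh_sq hγ hx]
  rw [axisFoot, cosh_arsinh]
  calc axisCosh γ x * √(1 + (-mink (toHyperboloid x) (frameDir γ) / axisCosh γ x) ^ 2)
      = √(axisCosh γ x ^ 2 * (1 + (-mink (toHyperboloid x) (frameDir γ) / axisCosh γ x) ^ 2)) := by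
        rw [sqrt_mul (sq_nonneg _), sqrt_sq (by linarith)]
    _ = _ := by rw [hsq, sqrt_sq hp]

lemma axisCosh_mul_sinh_axisFoot :
    axisCosh γ x * sinh (axisFoot γ x) = -mink (toHyperboloid x) (frameDir γ) := by
  have hK := one_le_axisCosh hγ hx
  rw [axisFoot, sinh_arsinh]
  field_simp

lemma toHyperboloid_eq_axisCosh_smul_add :
    toHyperboloid x
      = axisCosh γ x • toHyperboloid (γ (axisFoot γ x)) + normalPart γ (toHyperboloid x) := by
  rw [toHyperboloid_geodesic hγ, smul_add, smul_smul, smul_smul, axisCosh_mul_cosh_axisFoot hγ hx,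
    axisCosh_mul_sinh_axisFoot hγ hx, normalPart]
  module

lemma cosh_hDist_geodesic (t : ℝ) :
    cosh (hDist x (γ t)) = axisCosh γ x * cosh (axisFoot γ x - t) := by
  rw [cosh_hDist hx (hγ.1 t), toHyperboloid_eq_axisCosh_smul_add hγ hx, mink_add_left,
    mink_smul_left, mink_toHyperboloid_geodesic hγ, mink_normalPart_geodesic hγ, add_zero]

lemma cosh_axisDist : cosh (axisDist γ x) = axisCosh γ x := by
  rw [axisDist, cosh_hDist_geodesic hγ hx, sub_self, cosh_zero, mul_one]

lemma axisDist_le_hDist (t : ℝ) : axisDist γ x ≤ hDist x (γ t) := by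
  refine le_of_cosh_le_cosh (hDist_nonneg _ _) (hDist_nonneg _ _) ?_
  rw [cosh_axisDist hγ hx, cosh_hDist_geodesic hγ hx]
  nlinarith [one_le_axisCosh hγ hx, one_le_cosh (axisFoot γ x - t)]

lemma hDistToSet_range_eq_axisDist : hDistToSet x (range γ) = axisDist γ x :=
  IsLeast.csInf_eq ⟨⟨_, ⟨_, rfl⟩, rfl⟩, by
    rintro _ ⟨_, ⟨t, rfl⟩, rfl⟩; exact axisDist_le_hDist hγ hx t⟩

lemma toHyperboloid_eq_cosh_axisDist_smul_add :
    toHyperboloid x = cosh (axisDist γ x) • toHyperboloid (γ (axisFoot γ x))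
      + normalPart γ (toHyperboloid x) := by
  rw [cosh_axisDist hγ hx]; exact toHyperboloid_eq_axisCosh_smul_add hγ hx

lemma mink_normalPart_self :
    mink (normalPart γ (toHyperboloid x)) (normalPart γ (toHyperboloid x))
      = -sinh (axisDist γ x) ^ 2 := by
  have h := toHyperboloid_eq_cosh_axisDist_smul_add hγ hx
  rw [← sub_eq_iff_eq_add'] at h
  have hG := mink_toHyperboloid_self (hγ.1 (axisFoot γ x))
  have hXG := mink_normalPart_geodesic hγ (toHyperboloid x) (axisFoot γ x)
  rw [← h] at hXG ⊢
  simp only [mink_sub_left, mink_sub_right, mink_smul_left, mink_smul_right, hG,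
    mink_toHyperboloid_self hx, mink_comm (toHyperboloid (γ _)) (toHyperboloid x)] at hXG ⊢
  rw [show mink (toHyperboloid x) (toHyperboloid (γ (axisFoot γ x))) = cosh (axisDist γ x) by
    linarith]
  linear_combination (-1 : ℝ) * cosh_sq' (axisDist γ x)

end Point

variable {x y : E3} (hx : x ∈ ball3) (hy : y ∈ ball3)
include hx hy

lemma abs_mink_normalPart_le :
    |mink (normalPart γ (toHyperboloid x)) (normalPart γ (toHyperboloid y))|
      ≤ sinh (axisDist γ x) * sinh (axisDist γ y) := by
  refine abs_le_of_sq_le_sq ?_ (mul_nonneg (sinh_nonneg_iff.mpr (hDist_nonneg _ _))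
    (sinh_nonneg_iff.mpr (hDist_nonneg _ _)))
  have h := mink_sq_le_of_orthogonal (mink_frameBase_self hγ) (mink_normalPart_frameBase hγ _)
    (mink_normalPart_frameBase hγ (toHyperboloid y)) (X := normalPart γ (toHyperboloid x))
  rw [mink_normalPart_self hγ hx, mink_normalPart_self hγ hy] at h
  linarith

lemma cosh_hDist_eq_axis :
    cosh (hDist x y) = cosh (axisDist γ x) * cosh (axisDist γ y)
        * cosh (axisFoot γ x - axisFoot γ y)
      + mink (normalPart γ (toHyperboloid x)) (normalPart γ (toHyperboloid y)) := by
  rw [cosh_hDist hx hy]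
  conv_lhs => rw [toHyperboloid_eq_cosh_axisDist_smul_add hγ hx,
    toHyperboloid_eq_cosh_axisDist_smul_add hγ hy]
  simp only [mink_add_left, mink_add_right, mink_smul_left, mink_smul_right,
    mink_toHyperboloid_geodesic hγ, mink_normalPart_geodesic hγ,
    mink_comm (toHyperboloid (γ _)) (normalPart γ _)]
  ring

lemma axisDist_sub_axisDist_add_abs_le :
    axisDist γ x - axisDist γ y + |axisFoot γ x - axisFoot γ y| ≤ hDist x y + 2 := by
  set Δ := axisFoot γ x - axisFoot γ y
  have hn := (abs_le.mp (abs_mink_normalPart_le hγ hx hy)).1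
  have hsinh : 0 ≤ sinh (axisDist γ x) * sinh (axisDist γ y) :=
    mul_nonneg (sinh_nonneg_iff.mpr (hDist_nonneg _ _)) (sinh_nonneg_iff.mpr (hDist_nonneg _ _))
  have hcosh : cosh |Δ| * cosh (axisDist γ x - axisDist γ y) ≤ cosh (hDist x y) := by
    rw [cosh_hDist_eq_axis hγ hx hy, cosh_abs, cosh_sub (axisDist γ x)]
    nlinarith [mul_nonneg (sub_nonneg.mpr (one_le_cosh Δ)) hsinh]
  apply le_add_two_of_exp_le
  have := mul_le_mul (exp_div_two_le_cosh |Δ|) (exp_div_two_le_cosh (axisDist γ x - axisDist γ y))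
    (by positivity) (cosh_pos _).le
  rw [add_comm, exp_add]
  linarith [cosh_le_exp (hDist_nonneg x y)]

lemma hDist_le_axisDist_add_abs_add :
    hDist x y ≤ axisDist γ x + |axisFoot γ x - axisFoot γ y| + axisDist γ y := by
  have hGx := hγ.1 (axisFoot γ x)
  have hGy := hγ.1 (axisFoot γ y)
  calc hDist x y ≤ axisDist γ x + hDist (γ (axisFoot γ x)) y := hDist_triangle hx hGx hy
    _ ≤ axisDist γ x
          + (hDist (γ (axisFoot γ x)) (γ (axisFoot γ y)) + hDist (γ (axisFoot γ y)) y) := by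
        gcongr; exact hDist_triangle hGx hGy hy
    _ = _ := by rw [hγ.2, hDist_comm _ y]; unfold axisDist; ring

end Axis

section Tube

variable {γ : ℝ → E3} (hγ : IsUnitSpeedGeodesic γ)
include hγ

lemma continuousOn_axisFoot : ContinuousOn (axisFoot γ) ball3 := by
  have hD := (continuous_mink_left (frameDir γ)).comp_continuousOn continuousOn_toHyperboloid
  refine continuous_arsinh.comp_continuousOn (hD.neg.div (continuousOn_axisCosh γ) ?_)
  intro x hx
  linarith [one_le_axisCosh hγ hx]

lemma axisDist_eq_of_mem_tubeBoundary {x : E3} {R : ℝ} (hx : x ∈ tubeBoundary (range γ) R) :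
    axisDist γ x = R := by
  rw [← hDistToSet_range_eq_axisDist hγ hx.1, hx.2]

lemma le_axisDist_of_not_mem_interior_tube {x : E3} {R : ℝ} (hx : x ∈ ball3)
    (hxT : x ∉ interior (tube (range γ) R)) : R ≤ axisDist γ x := by
  by_contra! hlt
  have hR : 0 ≤ R := (hDist_nonneg _ _).trans hlt.le
  refine hxT (interior_maximal (t := ball3 ∩ axisCosh γ ⁻¹' Iio (cosh R)) ?_
    ((continuousOn_axisCosh γ).isOpen_inter_preimage Metric.isOpen_ball isOpen_Iio) ⟨hx, ?_⟩)
  · rintro y ⟨hy, hyR⟩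
    rw [mem_preimage, mem_Iio, ← cosh_axisDist hγ hy, cosh_lt_cosh, abs_of_nonneg hR] at hyR
    exact ⟨hy, (hDistToSet_range_eq_axisDist hγ hy).trans_le ((le_abs_self _).trans hyR.le)⟩
  · rw [mem_preimage, mem_Iio, ← cosh_axisDist hγ hx, cosh_lt_cosh, abs_of_nonneg hR]
    exact (abs_of_nonneg (hDist_nonneg _ _)).trans_lt hlt

lemma exists_axisFoot_eq_of_path {σ : ℝ → E3} (hσ : ContinuousOn σ (Icc 0 1))
    (hσb : ∀ t ∈ Icc (0 : ℝ) 1, σ t ∈ ball3) {c : ℝ}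
    (hc : (axisFoot γ (σ 0) - c) * (axisFoot γ (σ 1) - c) ≤ 0) :
    ∃ t ∈ Icc (0 : ℝ) 1, axisFoot γ (σ t) = c := by
  have hf : ContinuousOn (axisFoot γ ∘ σ) (uIcc 0 1) := by
    rw [uIcc_of_le zero_le_one]
    exact (continuousOn_axisFoot hγ).comp hσ hσb
  have hmem : c ∈ uIcc (axisFoot γ (σ 0)) (axisFoot γ (σ 1)) := by
    rcases mul_nonpos_iff.mp hc with ⟨h₀, h₁⟩ | ⟨h₀, h₁⟩
    · exact mem_uIcc_of_ge (by linarith) (by linarith)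
    · exact mem_uIcc_of_le (by linarith) (by linarith)
  obtain ⟨t, ht, hft⟩ := intermediate_value_uIcc hf hmem
  rw [uIcc_of_le zero_le_one] at ht
  exact ⟨t, ht, hft⟩

end Tube

section Segment

lemma sinh_smul_toHyperboloid_of_mem_hSeg {P₁ P₂ z : E3} (h₁ : P₁ ∈ ball3) (h₂ : P₂ ∈ ball3)
    (hz : z ∈ hSeg P₁ P₂) :
    sinh (hDist P₁ P₂) • toHyperboloid z
      = sinh (hDist z P₂) • toHyperboloid P₁ + sinh (hDist P₁ z) • toHyperboloid P₂ := by
  obtain ⟨hzb, hsum⟩ := hz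
  set a := hDist P₁ z
  set b := hDist z P₂
  set X₁ := toHyperboloid P₁
  set X₂ := toHyperboloid P₂
  set Z := toHyperboloid z
  have v₁₁ : mink X₁ X₁ = 1 := mink_toHyperboloid_self h₁
  have v₂₂ : mink X₂ X₂ = 1 := mink_toHyperboloid_self h₂
  have vzz : mink Z Z = 1 := mink_toHyperboloid_self hzb
  have v₂₁ : mink X₂ X₁ = cosh (a + b) := by rw [hsum, mink_comm, ← cosh_hDist h₁ h₂]
  have vz₁ : mink Z X₁ = cosh a := by rw [mink_comm, ← cosh_hDist h₁ hzb]
  have vz₂ : mink Z X₂ = cosh b := by rw [← cosh_hDist hzb h₂]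
  rw [← hsum]
  set W := sinh (a + b) • Z - (sinh b • X₁ + sinh a • X₂) with hW
  have hW₁ : mink W X₁ = 0 := by
    simp only [W, mink_sub_left, mink_add_left, mink_smul_left, v₁₁, v₂₁, vz₁, sinh_add, cosh_add]
    linear_combination sinh b * cosh_sq' a
  have hW₂ : mink W X₂ = 0 := by
    simp only [W, mink_sub_left, mink_add_left, mink_smul_left, v₂₂, mink_comm X₁ X₂, v₂₁, vz₂,
      sinh_add, cosh_add]
    linear_combination sinh a * cosh_sq' b
  have hWz : mink W Z = 0 := by
    simp only [W, mink_sub_left, mink_add_left, mink_smul_left, vzz, mink_comm X₁ Z,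
      mink_comm X₂ Z, vz₁, vz₂, sinh_add]
    ring
  have hWW : mink W W = 0 := by
    conv_lhs => enter [2]; rw [hW]
    simp only [mink_sub_right, mink_add_right, mink_smul_right, hW₁, hW₂, hWz]
    ring
  exact sub_eq_zero.mp (eq_zero_of_orthogonal_of_mink_self_eq_zero v₁₁ hW₁ hWW)

variable {γ : ℝ → E3} (hγ : IsUnitSpeedGeodesic γ)
include hγ

lemma sinh_axisDist_mul_sinh_le_of_mem_hSeg {P₁ P₂ z : E3} (h₁ : P₁ ∈ ball3) (h₂ : P₂ ∈ ball3)
    (hz : z ∈ hSeg P₁ P₂) :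
    sinh (axisDist γ z) * sinh (hDist P₁ P₂)
      ≤ sinh (hDist z P₂) * sinh (axisDist γ P₁) + sinh (hDist P₁ z) * sinh (axisDist γ P₂) := by
  have hn := congrArg (normalPart γ) (sinh_smul_toHyperboloid_of_mem_hSeg h₁ h₂ hz)
  rw [normalPart_smul, normalPart_add, normalPart_smul, normalPart_smul] at hn
  have hB := congrArg (fun X => mink X X) hn
  simp only [mink_add_left, mink_add_right, mink_smul_left, mink_smul_right,
    mink_normalPart_self hγ hz.1, mink_normalPart_self hγ h₁, mink_normalPart_self hγ h₂,
    mink_comm (normalPart γ (toHyperboloid P₂)) (normalPart γ (toHyperboloid P₁))] at hB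
  have h₁₂ := (abs_le.mp (abs_mink_normalPart_le hγ h₁ h₂)).1
  have hsz := sinh_nonneg_iff.mpr (axisDist_nonneg γ z)
  have hs₁ := sinh_nonneg_iff.mpr (axisDist_nonneg γ P₁)
  have hs₂ := sinh_nonneg_iff.mpr (axisDist_nonneg γ P₂)
  have hd := sinh_nonneg_iff.mpr (hDist_nonneg P₁ P₂)
  have ha := sinh_nonneg_iff.mpr (hDist_nonneg P₁ z)
  have hb := sinh_nonneg_iff.mpr (hDist_nonneg z P₂)
  refine (pow_le_pow_iff_left₀ (mul_nonneg hsz hd)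
    (add_nonneg (mul_nonneg hb hs₁) (mul_nonneg ha hs₂)) two_ne_zero).mp ?_
  nlinarith [mul_nonneg (mul_nonneg ha hb) (neg_le_iff_add_nonneg.mp h₁₂)]

lemma axisDist_le_of_mem_hSeg {P₁ P₂ z : E3} {R : ℝ} (h₁ : P₁ ∈ tubeBoundary (range γ) R)
    (h₂ : P₂ ∈ tubeBoundary (range γ) R) (hz : z ∈ hSeg P₁ P₂) (hd : 0 < hDist P₁ P₂) :
    axisDist γ z ≤ max (R - min (hDist P₁ z) (hDist z P₂)) 0 + 1 := by
  set a := hDist P₁ z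
  set b := hDist z P₂
  set μ := min a b
  have hρ₁ := axisDist_eq_of_mem_tubeBoundary hγ h₁
  have hρ₂ := axisDist_eq_of_mem_tubeBoundary hγ h₂
  have hR : 0 ≤ R := hρ₁ ▸ hDist_nonneg _ _
  have ha : 0 ≤ sinh a := sinh_nonneg_iff.mpr (hDist_nonneg _ _)
  have hb : 0 ≤ sinh b := sinh_nonneg_iff.mpr (hDist_nonneg _ _)
  have hsd : 0 < sinh (hDist P₁ P₂) := sinh_pos_iff.mpr hd
  have hconv := sinh_axisDist_mul_sinh_le_of_mem_hSeg hγ h₁.1 h₂.1 hz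
  rw [hρ₁, hρ₂] at hconv
  have hmin := exp_min_mul_sinh_add_sinh_le (hDist_nonneg P₁ z) (hDist_nonneg z P₂)
  rw [hz.2] at hmin
  have hexp : sinh (axisDist γ z) ≤ exp (R - μ) := by
    refine le_of_mul_le_mul_right ?_ hsd
    calc sinh (axisDist γ z) * sinh (hDist P₁ P₂) ≤ (sinh a + sinh b) * sinh R := by linarith
      _ ≤ (sinh a + sinh b) * (exp R / 2) :=
          mul_le_mul_of_nonneg_left (sinh_le_exp_div_two R) (add_nonneg ha hb)
      _ = exp (R - μ) * (exp μ * (sinh a + sinh b)) / 2 := by rw [exp_sub]; field_simp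
      _ ≤ exp (R - μ) * (2 * sinh (hDist P₁ P₂)) / 2 := by gcongr
      _ = exp (R - μ) * sinh (hDist P₁ P₂) := by ring
  have hmax : exp (R - μ) ≤ sinh (max (R - μ) 0 + 1) :=
    (exp_le_exp.mpr (le_max_left _ _)).trans (exp_le_sinh_add_one (le_max_right _ _))
  exact sinh_le_sinh.mp (hexp.trans hmax)

end Segment

section Endpoints

variable {γ : ℝ → E3} (hγ : IsUnitSpeedGeodesic γ) {o P₁ P₂ z : E3} (ho : o ∈ ball3) {R : ℝ}
  (hP₁ : P₁ ∈ tubeBoundary (range γ) R) (hP₂ : P₂ ∈ tubeBoundary (range γ) R)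
  (hz : z ∈ hSeg P₁ P₂)
include hγ ho hP₁ hP₂ hz

lemma axisDist_le_hDist_add_one_of_mem_hSeg (hRo : R ≤ axisDist γ o)
    (hfar : hDist o z + 1 < min (hDist P₁ z) (hDist z P₂)) :
    axisDist γ o ≤ hDist o z + 1 := by
  have hd : 0 < hDist P₁ P₂ := by
    rw [← hz.2]
    linarith [min_le_left (hDist P₁ z) (hDist z P₂), hDist_nonneg o z, hDist_nonneg z P₂]
  have hz_axis := axisDist_le_of_mem_hSeg hγ hP₁ hP₂ hz hd
  have ho_axis : axisDist γ o ≤ hDist o z + axisDist γ z :=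
    (axisDist_le_hDist hγ ho _).trans (hDist_triangle ho hz.1 (hγ.1 _))
  rcases le_total (R - min (hDist P₁ z) (hDist z P₂)) 0 with h | h
  · rw [max_eq_right h] at hz_axis; linarith
  · rw [max_eq_left h] at hz_axis; linarith

lemma axisDist_add_sub_le_hDist_of_mem_hSeg {k : ℝ}
    (hsign : 0 < (axisFoot γ P₁ - axisFoot γ o) * (axisFoot γ P₂ - axisFoot γ o))
    (hk₁ : k ≤ |axisFoot γ P₁ - axisFoot γ o|) (hk₂ : k ≤ |axisFoot γ P₂ - axisFoot γ o|) :
    axisDist γ o + k - 2 * R - 2 ≤ hDist o z := by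
  have hs := abs_sub_le_of_mul_pos hsign hk₁ hk₂
  rw [sub_sub_sub_cancel_right] at hs
  have hd := hDist_le_axisDist_add_abs_add hγ hP₁.1 hP₂.1
  have hu := axisDist_sub_axisDist_add_abs_le hγ ho hP₁.1
  have hv := axisDist_sub_axisDist_add_abs_le hγ ho hP₂.1
  rw [abs_sub_comm, axisDist_eq_of_mem_tubeBoundary hγ hP₁] at hu
  rw [abs_sub_comm, axisDist_eq_of_mem_tubeBoundary hγ hP₂] at hv
  rw [axisDist_eq_of_mem_tubeBoundary hγ hP₁, axisDist_eq_of_mem_tubeBoundary hγ hP₂] at hd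
  have hu' : hDist o P₁ ≤ hDist o z + hDist P₁ z :=
    (hDist_triangle ho hz.1 hP₁.1).trans_eq (by rw [hDist_comm z])
  have hv' : hDist o P₂ ≤ hDist o z + hDist z P₂ := hDist_triangle ho hz.1 hP₂.1
  linarith [hz.2]

end Endpoints

lemma quarter_sub_two_le_hDist_of_mem_hSeg {γ : ℝ → E3} (hγ : IsUnitSpeedGeodesic γ) {o : E3}
    (ho : o ∈ ball3) {N R : ℝ} (hoT : o ∉ interior (tube (range γ) R)) {σ : ℝ → E3}
    (hσ : ContinuousOn σ (Icc 0 1))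
    (hσT : ∀ t ∈ Icc (0 : ℝ) 1, σ t ∈ tubeBoundary (range γ) R ∧ N ≤ hDist o (σ t))
    {z : E3} (hz : z ∈ hSeg (σ 0) (σ 1)) : N / 4 - 2 ≤ hDist o z := by
  obtain ⟨hP₁, hN₁⟩ := hσT 0 (left_mem_Icc.mpr zero_le_one)
  obtain ⟨hP₂, hN₂⟩ := hσT 1 (right_mem_Icc.mpr zero_le_one)
  by_contra! hm
  have hm₀ := hDist_nonneg o z
  have hRo := le_axisDist_of_not_mem_interior_tube hγ ho hoT
  have hfar : N - hDist o z ≤ min (hDist (σ 0) z) (hDist z (σ 1)) := by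
    have hu := hDist_triangle ho hz.1 hP₁.1
    have hv := hDist_triangle ho hz.1 hP₂.1
    rw [hDist_comm z] at hu
    exact le_min (by linarith) (by linarith)
  have hρo := axisDist_le_hDist_add_one_of_mem_hSeg hγ ho hP₁ hP₂ hz hRo (by linarith)
  have hfoot : ∀ {w}, w ∈ tubeBoundary (range γ) R →
      hDist o w ≤ axisDist γ o + |axisFoot γ w - axisFoot γ o| + R := fun hw => by
    rw [abs_sub_comm, ← axisDist_eq_of_mem_tubeBoundary hγ hw]
    exact hDist_le_axisDist_add_abs_add hγ ho hw.1
  have hsign : 0 < (axisFoot γ (σ 0) - axisFoot γ o) * (axisFoot γ (σ 1) - axisFoot γ o) := by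
    by_contra! h
    obtain ⟨t, ht, hτ⟩ := exists_axisFoot_eq_of_path hγ hσ (fun t ht => (hσT t ht).1.1) h
    have := hfoot (hσT t ht).1
    rw [hτ, sub_self, abs_zero] at this
    linarith [(hσT t ht).2]
  have := axisDist_add_sub_le_hDist_of_mem_hSeg hγ ho hP₁ hP₂ hz hsign
    (k := N - axisDist γ o - R) (by linarith [hfoot hP₁]) (by linarith [hfoot hP₂])
  linarith

end HyperbolicTube

open HyperbolicTube in
theorem stmt7_general (R₀ : ℝ) :
    ∃ c : ℝ, 0 < c ∧ ∀ (N R : ℝ) (L : Set E3) (P₁ P₂ : E3),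
      IsGeodesicLine L → R₀ ≤ R →
      (0 : E3) ∉ interior (tube L R) →
      P₁ ∈ tubeBoundary L R → P₂ ∈ tubeBoundary L R →
      N ≤ hDist 0 P₁ → N ≤ hDist 0 P₂ →
      (∃ γ : ℝ → E3, ContinuousOn γ (Set.Icc 0 1) ∧ γ 0 = P₁ ∧ γ 1 = P₂ ∧
        ∀ t ∈ Set.Icc (0 : ℝ) 1, γ t ∈ tubeBoundary L R ∧ N ≤ hDist 0 (γ t)) →
      ∀ z ∈ hSeg P₁ P₂, N / 4 - c ≤ hDist 0 z := by
  refine ⟨2, two_pos, ?_⟩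
  rintro N R _ _ _ ⟨γ, hγb, hγd, rfl⟩ - hO - - - - ⟨σ, hσ, rfl, rfl, hσT⟩ z hz
  exact quarter_sub_two_le_hDist_of_mem_hSeg ⟨hγb, hγd⟩ (by simp [ball3]) hO hσ hσT hz

/-- Fix `R₀ > 0`. There is `c > 0` such that: if `T` is an equidistant
tube of radius `R ≥ R₀` about a geodesic `L`, the centre `O = 0` is not in the interior
of `T`, the points `P₁, P₂ ∈ ∂T` lie outside the hyperbolic `N`-ball about `O`, and some
path on `∂T` joining them stays outside that ball, then the geodesic segment `[P₁,P₂]`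
lies outside the ball of radius `N/4 - c`. -/
theorem stmt7 (R₀ : ℝ) (hR₀ : 0 < R₀) :
    ∃ c : ℝ, 0 < c ∧ ∀ (N R : ℝ) (L : Set E3) (P₁ P₂ : E3),
      IsGeodesicLine L → R₀ ≤ R →
      (0 : E3) ∉ interior (tube L R) →
      P₁ ∈ tubeBoundary L R → P₂ ∈ tubeBoundary L R →
      N ≤ hDist 0 P₁ → N ≤ hDist 0 P₂ →
      (∃ γ : ℝ → E3, ContinuousOn γ (Set.Icc 0 1) ∧ γ 0 = P₁ ∧ γ 1 = P₂ ∧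
        ∀ t ∈ Set.Icc (0 : ℝ) 1, γ t ∈ tubeBoundary L R ∧ N ≤ hDist 0 (γ t)) →
      ∀ z ∈ hSeg P₁ P₂, N / 4 - c ≤ hDist 0 z :=
  stmt7_general R₀
end
end
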